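/- For every DBM D over n clocks, the zone ⟦D⟧ is nonempty if and only if every cyclic path in D (a path with p₀ = p_m and m ≥ 1) has weight ≥ 0. In particular, consistency of a DBM is equivalent to the absence of negative-weight cycles. -/

import Mathlib

/-
A point of the zone telescopes along any cycle to a lower bound `0` on its weight. Conversely,
without negative cycles a walk of length at least the number of vertices repeats a vertex, and
cutting out the cycle in between does not increase its weight. Hence the Bellman–Ford values
after `n + 1` rounds (least weights of walks of length `≤ n + 1` from a virtual source joined to
every vertex by weight `0`) satisfy the triangle inequality `φ j ≤ φ i + D i j`, and `φ 0 - φ`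
lies in the zone.
-/

/-- A DBM over `n` clocks: index `0` is the reference clock. -/
abbrev DBM (n : ℕ) := Fin (n + 1) → Fin (n + 1) → WithTop ℝ

/-- The zone of a DBM. -/
def Zone {n : ℕ} (D : DBM n) : Set (Fin (n + 1) → ℝ) :=
  {v | v 0 = 0 ∧ ∀ i j, ((v i - v j : ℝ) : WithTop ℝ) ≤ D i j}

/-- Weight of the path `p 0, p 1, …, p m` in `D`, computed in `WithTop ℝ`. -/
def pathWeight {n : ℕ} (D : DBM n) (p : ℕ → Fin (n + 1)) (m : ℕ) : WithTop ℝ :=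
  ∑ k ∈ Finset.range m, D (p k) (p (k + 1))

open Finset Function

section Walks

variable {ι α : Type*} [AddCommMonoid α]

def walkWeight (w : ι → ι → α) (p : ℕ → ι) (m : ℕ) : α :=
  ∑ k ∈ range m, w (p k) (p (k + 1))

variable (w : ι → ι → α)

@[simp]
lemma walkWeight_zero (p : ℕ → ι) : walkWeight w p 0 = 0 := sum_range_zero _

lemma walkWeight_congr {p q : ℕ → ι} {m : ℕ} (h : ∀ t ≤ m, p t = q t) :
    walkWeight w p m = walkWeight w q m :=
  sum_congr rfl fun k hk => by
    rw [mem_range] at hk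
    rw [h k hk.le, h (k + 1) hk]

lemma walkWeight_add (p : ℕ → ι) (a b : ℕ) :
    walkWeight w p (a + b) = walkWeight w p a + walkWeight w (fun t => p (a + t)) b := by
  simp only [walkWeight, sum_range_add, add_assoc]

lemma walkWeight_update_succ (p : ℕ → ι) (m : ℕ) (j : ι) :
    walkWeight w (update p (m + 1) j) (m + 1) = walkWeight w p m + w (p m) j := by
  rw [walkWeight, sum_range_succ, update_self, update_of_ne (by omega)]
  congr 1
  exact walkWeight_congr w fun t ht => update_of_ne (by omega) _ _

lemma exists_lt_le_map_eq_of_card_le [Fintype ι] {p : ℕ → ι} {m : ℕ}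
    (hm : Fintype.card ι ≤ m) : ∃ a b, a < b ∧ b ≤ m ∧ p a = p b := by
  obtain ⟨a, b, hab, h⟩ := Fintype.exists_ne_map_eq_of_card_lt (fun t : Fin (m + 1) => p t)
    (by simpa using Nat.lt_succ_of_le hm)
  rcases lt_or_gt_of_ne (Fin.val_ne_of_ne hab) with hlt | hlt
  · exact ⟨a, b, hlt, b.is_le, h⟩
  · exact ⟨b, a, hlt, a.is_le, h.symm⟩

variable [LinearOrder α] [IsOrderedAddMonoid α]

def NoNegativeCycle (w : ι → ι → α) : Prop :=
  ∀ (m : ℕ) (p : ℕ → ι), 1 ≤ m → p 0 = p m → 0 ≤ walkWeight w p m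

variable {w}

/-- Cutting out the cycle between two visits of the same vertex. -/
lemma NoNegativeCycle.exists_shorter_walk [Fintype ι] (hw : NoNegativeCycle w)
    {p : ℕ → ι} {m : ℕ} (hm : Fintype.card ι ≤ m) :
    ∃ m' < m, ∃ q : ℕ → ι, q m' = p m ∧ walkWeight w q m' ≤ walkWeight w p m := by
  obtain ⟨a, b, hab, hbm, hpab⟩ := exists_lt_le_map_eq_of_card_le (p := p) hm
  obtain ⟨c, rfl⟩ := Nat.exists_eq_add_of_le hab.le
  obtain ⟨s, rfl⟩ := Nat.exists_eq_add_of_le hbm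
  set q : ℕ → ι := fun t => if t ≤ a then p t else p (t + c)
  have hq_shift : (fun t => q (a + t)) = fun t => p (a + c + t) := by
    funext t
    rcases t.eq_zero_or_pos with rfl | ht
    · simpa [q] using hpab
    · simp only [q, if_neg (by omega : ¬a + t ≤ a)]
      congr 1
      omega
  have hcycle : 0 ≤ walkWeight w (fun t => p (a + t)) c :=
    hw _ _ (by omega) (by simpa using hpab)
  refine ⟨a + s, by omega, q, by simpa using congr_fun hq_shift s, ?_⟩
  calc walkWeight w q (a + s)
      = walkWeight w p a + walkWeight w (fun t => p (a + c + t)) s := by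
        rw [walkWeight_add, hq_shift, walkWeight_congr w fun t ht => if_pos ht]
    _ ≤ walkWeight w p a + (walkWeight w (fun t => p (a + t)) c +
          walkWeight w (fun t => p (a + c + t)) s) := by
        gcongr
        exact le_add_of_nonneg_left hcycle
    _ = walkWeight w p (a + c + s) := by
        rw [add_assoc a, walkWeight_add, walkWeight_add w (fun t => p (a + t))]
        simp only [add_assoc]

lemma NoNegativeCycle.exists_walk_length_lt_card [Fintype ι] (hw : NoNegativeCycle w)
    (m : ℕ) (p : ℕ → ι) :
    ∃ m' < Fintype.card ι, ∃ q : ℕ → ι,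
      q m' = p m ∧ walkWeight w q m' ≤ walkWeight w p m := by
  induction m using Nat.strong_induction_on generalizing p with
  | _ m ih =>
    by_cases hm : m < Fintype.card ι
    · exact ⟨m, hm, p, rfl, le_rfl⟩
    obtain ⟨m', hm', q, hq, hqp⟩ := hw.exists_shorter_walk (not_lt.1 hm)
    obtain ⟨m'', hm'', r, hr, hrq⟩ := ih m' hm' q
    exact ⟨m'', hm'', r, hr.trans hq, hrq.trans hqp⟩

/-- `bellmanFord w k j` is the least weight of a walk of length at most `k` ending at `j`,
started anywhere. -/
def bellmanFord [Fintype ι] [Nonempty ι] (w : ι → ι → α) : ℕ → ι → α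
  | 0, _ => 0
  | k + 1, j =>
    min (bellmanFord w k j) (univ.inf' univ_nonempty fun i => bellmanFord w k i + w i j)

variable [Fintype ι] [Nonempty ι]

lemma bellmanFord_le_walkWeight {k m : ℕ} (hm : m ≤ k) (p : ℕ → ι) :
    bellmanFord w k (p m) ≤ walkWeight w p m := by
  induction k generalizing m with
  | zero => simp [Nat.le_zero.1 hm, bellmanFord]
  | succ k ih =>
    rcases hm.lt_or_eq with hm | rfl
    · exact (min_le_left _ _).trans (ih (Nat.le_of_lt_succ hm))
    calc bellmanFord w (k + 1) (p (k + 1))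
        ≤ bellmanFord w k (p k) + w (p k) (p (k + 1)) :=
          (min_le_right _ _).trans (inf'_le _ (mem_univ _))
      _ ≤ walkWeight w p k + w (p k) (p (k + 1)) := by gcongr; exact ih le_rfl
      _ = walkWeight w p (k + 1) := (sum_range_succ _ _).symm

lemma bellmanFord_nonpos (k : ℕ) (j : ι) : bellmanFord w k j ≤ 0 := by
  simpa using bellmanFord_le_walkWeight (Nat.zero_le k) fun _ => j

lemma exists_walkWeight_le_bellmanFord (k : ℕ) (j : ι) :
    ∃ m ≤ k, ∃ p : ℕ → ι, p m = j ∧ walkWeight w p m ≤ bellmanFord w k j := by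
  induction k generalizing j with
  | zero => exact ⟨0, le_rfl, fun _ => j, rfl, by simp [bellmanFord]⟩
  | succ k ih =>
    rcases min_choice (bellmanFord w k j)
        (univ.inf' univ_nonempty fun i => bellmanFord w k i + w i j) with h | h
    · obtain ⟨m, hm, p, hpj, hp⟩ := ih j
      exact ⟨m, hm.trans k.le_succ, p, hpj, hp.trans_eq h.symm⟩
    · obtain ⟨i, -, hi⟩ := exists_mem_eq_inf' univ_nonempty fun i => bellmanFord w k i + w i j
      obtain ⟨m, hm, p, rfl, hp⟩ := ih i
      refine ⟨m + 1, by omega, update p (m + 1) j, update_self .., ?_⟩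
      calc walkWeight w (update p (m + 1) j) (m + 1)
          = walkWeight w p m + w (p m) j := walkWeight_update_succ w p m j
        _ ≤ bellmanFord w k (p m) + w (p m) j := by gcongr
        _ = bellmanFord w (k + 1) j := by rw [← hi, ← h]; rfl

lemma NoNegativeCycle.bellmanFord_le_add (hw : NoNegativeCycle w) (i j : ι) :
    bellmanFord w (Fintype.card ι) j ≤ bellmanFord w (Fintype.card ι) i + w i j := by
  obtain ⟨m, -, p, rfl, hp⟩ := exists_walkWeight_le_bellmanFord (w := w) (Fintype.card ι) i
  obtain ⟨m', hm', q, hq, hqp⟩ := hw.exists_walk_length_lt_card (m + 1) (update p (m + 1) j)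
  calc bellmanFord w (Fintype.card ι) j
      = bellmanFord w (Fintype.card ι) (q m') := by rw [hq, update_self]
    _ ≤ walkWeight w q m' := bellmanFord_le_walkWeight hm'.le q
    _ ≤ walkWeight w p m + w (p m) j := hqp.trans_eq (walkWeight_update_succ w p m j)
    _ ≤ bellmanFord w (Fintype.card ι) (p m) + w (p m) j := by gcongr

end Walks

section Zone

variable {n : ℕ} {D : DBM n}

lemma coe_sub_le_pathWeight {v : Fin (n + 1) → ℝ} (hv : v ∈ Zone D) (p : ℕ → Fin (n + 1))
    (m : ℕ) : ((v (p 0) - v (p m) : ℝ) : WithTop ℝ) ≤ pathWeight D p m := by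
  rw [← sum_range_sub' (fun k => v (p k)), WithTop.coe_sum]
  exact sum_le_sum fun k _ => hv.2 _ _

lemma Zone.Nonempty.noNegativeCycle (h : (Zone D).Nonempty) : NoNegativeCycle D := by
  obtain ⟨v, hv⟩ := h
  intro m p _ hp
  show 0 ≤ pathWeight D p m
  simpa [hp] using coe_sub_le_pathWeight hv p m

lemma zone_nonempty_of_le_add {φ : Fin (n + 1) → ℝ}
    (hφ : ∀ i j, (φ j : WithTop ℝ) ≤ φ i + D i j) : (Zone D).Nonempty := by
  refine ⟨fun i => φ 0 - φ i, sub_self _, fun i j => ?_⟩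
  cases hD : D i j with
  | top => exact le_top
  | coe c =>
    have h : φ j ≤ φ i + c := by exact_mod_cast hD ▸ hφ i j
    exact_mod_cast (by linarith : φ 0 - φ i - (φ 0 - φ j) ≤ c)

lemma NoNegativeCycle.zone_nonempty (hD : NoNegativeCycle D) : (Zone D).Nonempty := by
  have hfin : ∀ i, bellmanFord D (n + 1) i ≠ ⊤ := fun i =>
    ((bellmanFord_nonpos (n + 1) i).trans_lt (WithTop.coe_lt_top 0)).ne
  lift bellmanFord D (n + 1) to Fin (n + 1) → ℝ using hfin with φ hφ
  apply zone_nonempty_of_le_add (φ := φ)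
  intro i j
  simpa [← hφ] using hD.bellmanFord_le_add i j

end Zone

/-- the zone of a DBM is nonempty iff every cyclic path has nonnegative
weight, i.e. consistency is equivalent to the absence of negative-weight cycles. -/
theorem zone_nonempty_iff_no_negative_cycle {n : ℕ} (D : DBM n) :
    (Zone D).Nonempty ↔
      ∀ (m : ℕ) (p : ℕ → Fin (n + 1)), 1 ≤ m → p 0 = p m →
        (0 : WithTop ℝ) ≤ pathWeight D p m :=
  ⟨Zone.Nonempty.noNegativeCycle, NoNegativeCycle.zone_nonempty⟩
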